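/- arXiv:2512.21298 — 3 statements merged into one kernel-verified Lean document; each statement's English description precedes it below -/
import Mathlib

section
/- Let k be an integer at least 2. If G is a connected finite simple graph of order n at least k+6, size m at most ((k+3)/2)·n + (k−1)/2, and minimum degree exactly k+3, then G has a minimum cut S such that the subgraph of G induced by S is k-degenerate. -/
/-- `S` is a (vertex) cut of `G`: deleting the vertices of `S` disconnects `G`. -/
def SimpleGraph.IsCutset {V : Type*} (G : SimpleGraph V) (S : Set V) : Prop :=
  ¬ (G.induce Sᶜ).Preconnected

/-- The set `S` induces a `k`-degenerate subgraph of `G`: every non-empty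
subset `T` of `S` contains a vertex with at most `k` neighbors in `T`. -/
def SimpleGraph.DegenSet {V : Type*} (G : SimpleGraph V) (k : ℕ) (S : Set V) : Prop :=
  ∀ T ⊆ S, T.Nonempty → ∃ v ∈ T, {w ∈ T | G.Adj v w}.ncard ≤ k

open Finset

section Aux

lemma walk_closed {W : Type*} {H : SimpleGraph W} {U : Set W}
    (hU : ∀ ⦃x y⦄, x ∈ U → H.Adj x y → y ∈ U) {a b : W} (w : H.Walk a b)
    (ha : a ∈ U) : b ∈ U := by
  induction w with
  | nil => exact ha
  | cons h p ih => exact ih (hU ha h)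

lemma isCutset_of {V : Type*} (G : SimpleGraph V) (S U : Set V)
    (hUS : ∀ x ∈ U, x ∉ S)
    (hcl : ∀ x ∈ U, ∀ y, y ∉ S → G.Adj x y → y ∈ U)
    {p q : V} (hp : p ∈ U) (hqS : q ∉ S) (hqU : q ∉ U) : G.IsCutset S := by
  intro hpre
  have hpS : p ∉ S := hUS p hp
  obtain ⟨w⟩ := hpre ⟨p, by simpa using hpS⟩ ⟨q, by simpa using hqS⟩
  have hq : (q : V) ∈ U := by
    refine walk_closed (H := G.induce Sᶜ) (U := {z : (Sᶜ : Set V) | (↑z : V) ∈ U}) ?_ w hp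
    intro x y hx hxy
    exact hcl x hx y y.2 (by simpa using hxy)
  exact hqU hq

variable {V : Type*} [Fintype V] [DecidableEq V] (G : SimpleGraph V) [DecidableRel G.Adj]

/-- twice the number of edges inside `R` -/
def E2 (R : Finset V) : ℕ := ∑ v ∈ R, (G.neighborFinset v ∩ R).card

lemma E2_insert (z : V) (R : Finset V) (hz : z ∉ R) :
    E2 G (insert z R) = E2 G R + 2 * (G.neighborFinset z ∩ R).card := by
  unfold E2
  rw [Finset.sum_insert hz]
  have h1 : G.neighborFinset z ∩ insert z R = G.neighborFinset z ∩ R := by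
    ext y
    simp only [mem_inter, mem_insert, SimpleGraph.mem_neighborFinset]
    constructor
    · rintro ⟨ha, rfl | hy⟩
      · exact absurd ha (G.irrefl)
      · exact ⟨ha, hy⟩
    · tauto
  have h2 : ∀ v ∈ R, (G.neighborFinset v ∩ insert z R).card
      = (G.neighborFinset v ∩ R).card + (if G.Adj v z then 1 else 0) := by
    intro v hv
    by_cases h : G.Adj v z
    · have : G.neighborFinset v ∩ insert z R = insert z (G.neighborFinset v ∩ R) := by
        ext y
        simp only [mem_inter, mem_insert, SimpleGraph.mem_neighborFinset]
        constructor
        · rintro ⟨ha, rfl | hy⟩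
          · exact Or.inl rfl
          · exact Or.inr ⟨ha, hy⟩
        · rintro (rfl | ⟨ha, hy⟩)
          · exact ⟨h, Or.inl rfl⟩
          · exact ⟨ha, Or.inr hy⟩
      rw [this, Finset.card_insert_of_notMem (by simp [hz]), if_pos h]
    · have : G.neighborFinset v ∩ insert z R = G.neighborFinset v ∩ R := by
        ext y
        simp only [mem_inter, mem_insert, SimpleGraph.mem_neighborFinset]
        constructor
        · rintro ⟨ha, rfl | hy⟩
          · exact absurd ha h
          · exact ⟨ha, hy⟩
        · tauto
      rw [this, if_neg h]
      omega
  have h3 : (∑ x ∈ R, if G.Adj x z then 1 else 0) = (G.neighborFinset z ∩ R).card := by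
    rw [← Finset.card_filter]
    congr 1
    ext y
    simp only [mem_filter, mem_inter, SimpleGraph.mem_neighborFinset]
    constructor
    · rintro ⟨hy, ha⟩; exact ⟨ha.symm, hy⟩
    · rintro ⟨ha, hy⟩; exact ⟨hy, ha.symm⟩
  rw [Finset.sum_congr rfl h2, Finset.sum_add_distrib, h1, h3]
  ring

/-- every vertex of a minimum cut has a neighbour in each "side". -/
lemma nbr_side (S C C' : Finset V)
    (hmin : ∀ R : Finset V, G.IsCutset ↑R → S.card ≤ R.card)
    (hCS : ∀ x ∈ C, x ∉ S) (hC'S : ∀ x ∈ C', x ∉ S)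
    (hCC' : ∀ y ∈ C, ∀ z ∈ C', ¬ G.Adj y z)
    (hdisj : ∀ y ∈ C', y ∉ C)
    (hcover : ∀ y, y ∉ S → y ∈ C ∨ y ∈ C')
    (hCne : C.Nonempty) (hC'ne : C'.Nonempty)
    (s : V) (hs : s ∈ S) : (G.neighborFinset s ∩ C).Nonempty := by
  by_contra h
  obtain ⟨p, hp⟩ := hCne
  obtain ⟨q, hq⟩ := hC'ne
  have hcut : G.IsCutset ↑(S.erase s) := by
    apply isCutset_of G _ (↑C : Set V) (p := p) (q := q)
    · intro x hx hxS
      exact hCS x (Finset.mem_coe.mp hx) (Finset.mem_of_mem_erase hxS)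
    · intro x hx y hyS hadj
      have hxC : x ∈ C := Finset.mem_coe.mp hx
      by_cases hy : y ∈ S
      · have hys : y = s := by
          by_contra hne
          exact hyS (Finset.mem_coe.mpr (Finset.mem_erase.mpr ⟨hne, hy⟩))
        subst hys
        exact absurd ⟨x, Finset.mem_inter.mpr ⟨SimpleGraph.mem_neighborFinset _ _ _ |>.mpr hadj.symm, hxC⟩⟩ h
      · rcases hcover y hy with h1 | h1
        · exact Finset.mem_coe.mpr h1
        · exact absurd hadj (hCC' x hxC y h1)
    · exact Finset.mem_coe.mpr hp
    · intro hqmem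
      exact hC'S q hq (Finset.mem_of_mem_erase (Finset.mem_coe.mp hqmem))
    · intro hqC
      exact hdisj q hq (Finset.mem_coe.mp hqC)
  have h1 := hmin _ hcut
  have h2 := Finset.card_erase_of_mem hs
  have h3 : 1 ≤ S.card := Finset.card_pos.mpr ⟨s, hs⟩
  omega

end Aux

section Contra
variable {V : Type*} [Fintype V] [DecidableEq V] (G : SimpleGraph V) [DecidableRel G.Adj]

lemma main_contra (k : ℕ) (S C C' A : Finset V)
    (hmin : ∀ R : Finset V, G.IsCutset ↑R → S.card ≤ R.card)
    (hemin : ∀ R : Finset V, G.IsCutset ↑R → R.card = S.card → E2 G S ≤ E2 G R)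
    (hCS : ∀ x ∈ C, x ∉ S) (hC'S : ∀ x ∈ C', x ∉ S)
    (hCC' : ∀ y ∈ C, ∀ z ∈ C', ¬ G.Adj y z)
    (hcover : ∀ y, y ∉ S → y ∈ C ∨ y ∈ C')
    (hC2 : 2 ≤ C.card)
    (hAS : A ⊆ S) (hA3 : 3 ≤ A.card)
    (hSk : S.card ≤ k + 3)
    (hA1 : ∀ v ∈ A, (G.neighborFinset v ∩ C).card = 1)
    (hAdeg : ∀ v ∈ A, (G.neighborFinset v ∩ S).card = k + 1) : False := by
  classical
  have hxv : ∀ v ∈ A, ∃ x, G.neighborFinset v ∩ C = {x} :=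
    fun v hv => Finset.card_eq_one.mp (hA1 v hv)
  -- the swap argument: the unique C-neighbour of any v ∈ A has ≥ k+2 neighbours in S
  have hswap : ∀ v ∈ A, ∀ x, G.neighborFinset v ∩ C = {x} →
      k + 2 ≤ (G.neighborFinset x ∩ S).card := by
    intro v hv x hx
    have hxmem : x ∈ G.neighborFinset v ∩ C := hx ▸ Finset.mem_singleton_self x
    have hxC : x ∈ C := (Finset.mem_inter.mp hxmem).2
    have hadjvx : G.Adj v x :=
      (SimpleGraph.mem_neighborFinset _ _ _).mp (Finset.mem_inter.mp hxmem).1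
    have hxS : x ∉ S := hCS x hxC
    have hvS : v ∈ S := hAS hv
    set S' := insert x (S.erase v) with hS'def
    have hxne : x ∉ S.erase v := fun h => hxS (Finset.mem_of_mem_erase h)
    have hScard1 : 1 ≤ S.card := Finset.card_pos.mpr ⟨v, hvS⟩
    have hcard' : S'.card = S.card := by
      rw [hS'def, Finset.card_insert_of_notMem hxne, Finset.card_erase_of_mem hvS]
      omega
    have hcut' : G.IsCutset ↑S' := by
      have hCx : 1 ≤ (C.erase x).card := by
        have := Finset.card_erase_of_mem hxC
        omega
      obtain ⟨p, hp⟩ := Finset.card_pos.mp (by omega : 0 < (C.erase x).card)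
      apply isCutset_of G _ (↑(C.erase x) : Set V) (p := p) (q := v)
      · intro z hz hzS'
        have hz' := Finset.mem_coe.mp hz
        have hzx := (Finset.mem_erase.mp hz').1
        have hzC := (Finset.mem_erase.mp hz').2
        rcases Finset.mem_insert.mp hzS' with h1 | h1
        · exact hzx h1
        · exact hCS z hzC (Finset.mem_of_mem_erase h1)
      · intro z hz y hyS' hadj
        have hz' := Finset.mem_coe.mp hz
        have hzx := (Finset.mem_erase.mp hz').1
        have hzC := (Finset.mem_erase.mp hz').2
        have hyx : y ≠ x := by
          intro hh
          rw [hh] at hyS'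
          exact hyS' (Finset.mem_coe.mpr (Finset.mem_insert_self x _))
        by_cases hy : y ∈ S
        · have hyv : y = v := by
            by_contra hne
            exact hyS' (Finset.mem_coe.mpr
              (Finset.mem_insert_of_mem (Finset.mem_erase.mpr ⟨hne, hy⟩)))
          subst hyv
          exfalso
          have : z ∈ G.neighborFinset y ∩ C := Finset.mem_inter.mpr
            ⟨(SimpleGraph.mem_neighborFinset _ _ _).mpr hadj.symm, hzC⟩
          rw [hx] at this
          exact hzx (Finset.mem_singleton.mp this)
        · rcases hcover y hy with h1 | h1
          · exact Finset.mem_coe.mpr (Finset.mem_erase.mpr ⟨hyx, h1⟩)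
          · exact absurd hadj (hCC' z hzC y h1)
      · exact Finset.mem_coe.mpr hp
      · intro hv'
        rcases Finset.mem_insert.mp (Finset.mem_coe.mp hv') with h1 | h1
        · exact hxS (h1 ▸ hvS)
        · exact (Finset.mem_erase.mp h1).1 rfl
      · intro hv'
        exact hCS v (Finset.mem_of_mem_erase (Finset.mem_coe.mp hv')) hvS
    have hE := hemin S' hcut' hcard'
    have e1 : E2 G S = E2 G (S.erase v) + 2 * (G.neighborFinset v ∩ (S.erase v)).card := by
      conv_lhs => rw [← Finset.insert_erase hvS]
      exact E2_insert G v (S.erase v) (Finset.notMem_erase v S)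
    have e2 : E2 G S' = E2 G (S.erase v) + 2 * (G.neighborFinset x ∩ (S.erase v)).card :=
      E2_insert G x _ hxne
    have e3 : (G.neighborFinset v ∩ (S.erase v)).card = k + 1 := by
      rw [← hAdeg v hv]
      congr 1
      ext w
      simp only [Finset.mem_inter, Finset.mem_erase, SimpleGraph.mem_neighborFinset]
      constructor
      · rintro ⟨h1, _, h2⟩; exact ⟨h1, h2⟩
      · rintro ⟨h1, h2⟩; exact ⟨h1, (G.ne_of_adj h1).symm, h2⟩
    have e4 : k + 1 ≤ (G.neighborFinset x ∩ (S.erase v)).card := by omega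
    have hins : insert v (G.neighborFinset x ∩ (S.erase v)) ⊆ G.neighborFinset x ∩ S := by
      intro w hw
      rcases Finset.mem_insert.mp hw with rfl | hw'
      · exact Finset.mem_inter.mpr
          ⟨(SimpleGraph.mem_neighborFinset _ _ _).mpr hadjvx.symm, hvS⟩
      · have := Finset.mem_inter.mp hw'
        exact Finset.mem_inter.mpr ⟨this.1, Finset.mem_of_mem_erase this.2⟩
    have hvnot : v ∉ G.neighborFinset x ∩ (S.erase v) := by
      intro h
      exact (Finset.mem_erase.mp (Finset.mem_inter.mp h).2).1 rfl
    have := Finset.card_le_card hins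
    rw [Finset.card_insert_of_notMem hvnot] at this
    omega
  set X := C.filter (fun x => ∃ v ∈ A, G.neighborFinset v ∩ C = {x}) with hXdef
  by_cases hX : 2 ≤ X.card
  · -- two distinct attachment points: count non-neighbours
    obtain ⟨x1, hx1, x2, hx2, hne12⟩ := Finset.one_lt_card.mp hX
    have hmiss : ∀ x ∈ X, (A.filter (fun v => ¬ G.neighborFinset v ∩ C = {x})).card ≤ 1 := by
      intro x hxX
      obtain ⟨hxC, v0, hv0A, hv0x⟩ := Finset.mem_filter.mp hxX
      have hk2 := hswap v0 hv0A x hv0x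
      have hsub : A.filter (fun v => ¬ G.neighborFinset v ∩ C = {x})
          ⊆ S \ G.neighborFinset x := by
        intro v hv
        obtain ⟨hvA, hvne⟩ := Finset.mem_filter.mp hv
        obtain ⟨y, hy⟩ := hxv v hvA
        have hyx : y ≠ x := fun h => hvne (h ▸ hy)
        refine Finset.mem_sdiff.mpr ⟨hAS hvA, fun hmem => ?_⟩
        have hadj : G.Adj x v := (SimpleGraph.mem_neighborFinset _ _ _).mp hmem
        have : x ∈ G.neighborFinset v ∩ C := Finset.mem_inter.mpr
          ⟨(SimpleGraph.mem_neighborFinset _ _ _).mpr hadj.symm, hxC⟩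
        rw [hy] at this
        exact hyx (Finset.mem_singleton.mp this).symm
      have hcount : (S \ G.neighborFinset x).card + (S ∩ G.neighborFinset x).card = S.card :=
        Finset.card_sdiff_add_card_inter S (G.neighborFinset x)
      have : (G.neighborFinset x ∩ S).card = (S ∩ G.neighborFinset x).card := by
        rw [Finset.inter_comm]
      have := Finset.card_le_card hsub
      omega
    have h1 := hmiss x1 hx1
    have h2 := hmiss x2 hx2
    have hsub12 : A.filter (fun v => G.neighborFinset v ∩ C = {x1})
        ⊆ A.filter (fun v => ¬ G.neighborFinset v ∩ C = {x2}) := by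
      intro v hv
      obtain ⟨hvA, hveq⟩ := Finset.mem_filter.mp hv
      refine Finset.mem_filter.mpr ⟨hvA, fun h => ?_⟩
      rw [hveq] at h
      exact hne12 (Finset.singleton_inj.mp h)
    have hsplit := Finset.card_filter_add_card_filter_not
      (s := A) (p := fun v => G.neighborFinset v ∩ C = {x1})
    have := Finset.card_le_card hsub12
    omega
  · -- all of A attaches to a single vertex x*
    push_neg at hX
    have hAne : A.Nonempty := Finset.card_pos.mp (by omega)
    obtain ⟨v0, hv0⟩ := hAne
    obtain ⟨x0, hx0⟩ := hxv v0 hv0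
    have hx0C : x0 ∈ C := by
      have : x0 ∈ G.neighborFinset v0 ∩ C := hx0 ▸ Finset.mem_singleton_self x0
      exact (Finset.mem_inter.mp this).2
    have hx0X : x0 ∈ X := Finset.mem_filter.mpr ⟨hx0C, v0, hv0, hx0⟩
    have hall : ∀ v ∈ A, G.neighborFinset v ∩ C = {x0} := by
      intro v hv
      obtain ⟨y, hy⟩ := hxv v hv
      have hyC : y ∈ C := by
        have : y ∈ G.neighborFinset v ∩ C := hy ▸ Finset.mem_singleton_self y
        exact (Finset.mem_inter.mp this).2
      have hyX : y ∈ X := Finset.mem_filter.mpr ⟨hyC, v, hv, hy⟩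
      have : y = x0 := by
        by_contra hne
        have : 2 ≤ X.card := Finset.one_lt_card.mpr ⟨y, hyX, x0, hx0X, hne⟩
        omega
      rw [this] at hy
      exact hy
    have hx0S : x0 ∉ S := hCS x0 hx0C
    set W := insert x0 (S.filter (fun s => ∃ y ∈ C.erase x0, G.Adj s y)) with hWdef
    have hWA : ∀ v ∈ A, v ∉ W := by
      intro v hv hvW
      rcases Finset.mem_insert.mp hvW with h1 | h1
      · exact hx0S (h1 ▸ hAS hv)
      · obtain ⟨_, y, hy, hadj⟩ := Finset.mem_filter.mp h1
        have hyx := (Finset.mem_erase.mp hy).1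
        have hyC := (Finset.mem_erase.mp hy).2
        have : y ∈ G.neighborFinset v ∩ C := Finset.mem_inter.mpr
          ⟨(SimpleGraph.mem_neighborFinset _ _ _).mpr hadj, hyC⟩
        rw [hall v hv] at this
        exact hyx (Finset.mem_singleton.mp this)
    have hWcard : W.card + 2 ≤ S.card := by
      have hfsub : S.filter (fun s => ∃ y ∈ C.erase x0, G.Adj s y) ⊆ S \ A := by
        intro s hs
        refine Finset.mem_sdiff.mpr ⟨(Finset.mem_filter.mp hs).1, fun hsA => ?_⟩
        exact hWA s hsA (Finset.mem_insert_of_mem hs)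
      have h1 := Finset.card_le_card hfsub
      have h2 : (S \ A).card = S.card - A.card := Finset.card_sdiff_of_subset hAS
      have h3 : W.card ≤ (S.filter (fun s => ∃ y ∈ C.erase x0, G.Adj s y)).card + 1 := by
        rw [hWdef]; exact Finset.card_insert_le _ _
      have h4 := Finset.card_le_card hAS
      omega
    have hWcut : G.IsCutset ↑W := by
      have hCx : 1 ≤ (C.erase x0).card := by
        have := Finset.card_erase_of_mem hx0C
        omega
      obtain ⟨p, hp⟩ := Finset.card_pos.mp (by omega : 0 < (C.erase x0).card)
      apply isCutset_of G _ (↑(C.erase x0) : Set V) (p := p) (q := v0)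
      · intro z hz hzW
        have hz' := Finset.mem_coe.mp hz
        have hzx := (Finset.mem_erase.mp hz').1
        have hzC := (Finset.mem_erase.mp hz').2
        rcases Finset.mem_insert.mp hzW with h1 | h1
        · exact hzx h1
        · exact hCS z hzC (Finset.mem_filter.mp h1).1
      · intro z hz y hyW hadj
        have hz' := Finset.mem_coe.mp hz
        have hzx := (Finset.mem_erase.mp hz').1
        have hzC := (Finset.mem_erase.mp hz').2
        have hyx : y ≠ x0 := by
          intro hh
          rw [hh] at hyW
          exact hyW (Finset.mem_coe.mpr (Finset.mem_insert_self x0 _))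
        by_cases hy : y ∈ S
        · exfalso
          apply hyW
          refine Finset.mem_coe.mpr (Finset.mem_insert_of_mem (Finset.mem_filter.mpr
            ⟨hy, z, Finset.mem_erase.mpr ⟨hzx, hzC⟩, hadj.symm⟩))
        · rcases hcover y hy with h1 | h1
          · exact Finset.mem_coe.mpr (Finset.mem_erase.mpr ⟨hyx, h1⟩)
          · exact absurd hadj (hCC' z hzC y h1)
      · exact Finset.mem_coe.mpr hp
      · exact fun h => hWA v0 hv0 (Finset.mem_coe.mp h)
      · intro h
        exact hCS v0 (Finset.mem_of_mem_erase (Finset.mem_coe.mp h)) (hAS hv0)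
    have := hmin W hWcut
    omega

end Contra

theorem stmt3 {V : Type*} [Fintype V] (G : SimpleGraph V) [DecidableRel G.Adj]
    (k : ℕ) (hk : 2 ≤ k) (hconn : G.Connected) (hn : k + 6 ≤ Fintype.card V)
    (hm : (G.edgeFinset.card : ℝ)
        ≤ ((k : ℝ) + 3) / 2 * (Fintype.card V : ℝ) + ((k : ℝ) - 1) / 2)
    (hd : G.minDegree = k + 3) :
    ∃ S : Set V, G.IsCutset S ∧ (∀ T : Set V, G.IsCutset T → S.ncard ≤ T.ncard) ∧
      G.DegenSet k S := by
  classical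
  set n := Fintype.card V with hndef
  have hne : Nonempty V := Fintype.card_pos_iff.mp (by omega)
  have hdeg : ∀ v, k + 3 ≤ G.degree v := fun v => by
    rw [← hd]; exact G.minDegree_le_degree v
  obtain ⟨v0, hv0⟩ := G.exists_minimal_degree_vertex
  have hdeg0 : G.degree v0 = k + 3 := by rw [← hv0, hd]
  have hNcard : (G.neighborFinset v0).card = k + 3 := by
    rw [G.card_neighborFinset_eq_degree, hdeg0]
  obtain ⟨q0, hq0⟩ : ∃ q, q ∉ insert v0 (G.neighborFinset v0) := by
    by_contra h
    push_neg at h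
    have hsub : (univ : Finset V) ⊆ insert v0 (G.neighborFinset v0) := fun x _ => h x
    have := Finset.card_le_card hsub
    have h2 := Finset.card_insert_le v0 (G.neighborFinset v0)
    rw [Finset.card_univ] at this
    omega
  have hq0N : q0 ∉ G.neighborFinset v0 := fun h => hq0 (Finset.mem_insert_of_mem h)
  have hq0v : q0 ≠ v0 := fun h => hq0 (h ▸ Finset.mem_insert_self _ _)
  have hcut0 : G.IsCutset ↑(G.neighborFinset v0) := by
    apply isCutset_of G _ ({v0} : Set V) (p := v0) (q := q0)
    · intro x hx
      rw [Set.mem_singleton_iff] at hx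
      subst hx
      intro hmem
      exact G.irrefl ((SimpleGraph.mem_neighborFinset _ _ _).mp (Finset.mem_coe.mp hmem))
    · intro x hx y hyS hadj
      rw [Set.mem_singleton_iff] at hx
      subst hx
      exact absurd (Finset.mem_coe.mpr ((SimpleGraph.mem_neighborFinset _ _ _).mpr hadj)) hyS
    · rfl
    · exact fun h => hq0N (Finset.mem_coe.mp h)
    · exact fun h => hq0v (Set.mem_singleton_iff.mp h)
  -- choose a minimum cut, minimizing also the number of internal edges
  set Cuts : Finset (Finset V) := univ.filter (fun R => G.IsCutset ↑R) with hCutsdef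
  have hCne : G.neighborFinset v0 ∈ Cuts := Finset.mem_filter.mpr ⟨Finset.mem_univ _, hcut0⟩
  obtain ⟨S1, hS1, hS1min⟩ := Finset.exists_min_image Cuts (fun R => R.card) ⟨_, hCne⟩
  set Pool2 : Finset (Finset V) := Cuts.filter (fun R => R.card = S1.card) with hPool2def
  obtain ⟨S, hSmem, hSemin⟩ := Finset.exists_min_image Pool2 (E2 G)
    ⟨S1, Finset.mem_filter.mpr ⟨hS1, rfl⟩⟩
  have hScut : G.IsCutset (↑S : Set V) :=
    (Finset.mem_filter.mp (Finset.mem_filter.mp hSmem).1).2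
  have hScard : S.card = S1.card := (Finset.mem_filter.mp hSmem).2
  have hmin : ∀ R : Finset V, G.IsCutset ↑R → S.card ≤ R.card := by
    intro R hR
    rw [hScard]
    exact hS1min R (Finset.mem_filter.mpr ⟨Finset.mem_univ _, hR⟩)
  have hemin : ∀ R : Finset V, G.IsCutset ↑R → R.card = S.card → E2 G S ≤ E2 G R := by
    intro R hR hcard
    exact hSemin R (Finset.mem_filter.mpr ⟨Finset.mem_filter.mpr ⟨Finset.mem_univ _, hR⟩,
      by rw [hcard, hScard]⟩)
  have hκ : S.card ≤ k + 3 := by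
    have := hmin _ hcut0
    omega
  refine ⟨↑S, hScut, ?_, ?_⟩
  · intro T hT
    have hTfin := Set.toFinite T
    have hcoe : ↑hTfin.toFinset = T := Set.Finite.coe_toFinset hTfin
    rw [Set.ncard_coe_finset, ← hcoe, Set.ncard_coe_finset]
    exact hmin _ (by rwa [hcoe])
  · -- degeneracy: by contradiction
    intro T hTsub hTne
    by_contra hbad
    push_neg at hbad
    set Tf := (Set.toFinite T).toFinset with hTfdef
    have hTmem : ∀ v, v ∈ Tf ↔ v ∈ T := fun v => Set.Finite.mem_toFinset _
    have hdegT : ∀ v ∈ Tf, k + 1 ≤ (G.neighborFinset v ∩ Tf).card := by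
      intro v hv
      have h1 := hbad v ((hTmem v).mp hv)
      have heq : {w ∈ T | G.Adj v w} = ↑(G.neighborFinset v ∩ Tf) := by
        ext w
        simp only [Set.mem_setOf_eq, Finset.coe_inter, Set.mem_inter_iff, Finset.mem_coe,
          SimpleGraph.mem_neighborFinset, hTmem]
        tauto
      rw [heq, Set.ncard_coe_finset] at h1
      omega
    have hTfS : Tf ⊆ S := by
      intro v hv
      exact Finset.mem_coe.mp (hTsub ((hTmem v).mp hv))
    have hTfcard : k + 2 ≤ Tf.card := by
      obtain ⟨v, hv⟩ := hTne
      have hvTf : v ∈ Tf := (hTmem v).mpr hv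
      have h1 := hdegT v hvTf
      have hsub : G.neighborFinset v ∩ Tf ⊆ Tf.erase v := by
        intro w hw
        obtain ⟨hw1, hw2⟩ := Finset.mem_inter.mp hw
        exact Finset.mem_erase.mpr ⟨(G.ne_of_adj ((SimpleGraph.mem_neighborFinset _ _ _).mp hw1)).symm, hw2⟩
      have := Finset.card_le_card hsub
      have := Finset.card_erase_of_mem hvTf
      omega
    -- budget
    have h2m : 2 * G.edgeFinset.card ≤ (k + 3) * n + (k - 1) := by
      have hc : ((k - 1 : ℕ) : ℝ) = (k : ℝ) - 1 := by
        rw [Nat.cast_sub (by omega : 1 ≤ k)]; norm_num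
      have : (2 * G.edgeFinset.card : ℝ) ≤ ((k : ℝ) + 3) * n + ((k - 1 : ℕ) : ℝ) := by
        rw [hc]; push_cast; linarith
      exact_mod_cast this
    have hsum : ∑ v, G.degree v = 2 * G.edgeFinset.card := G.sum_degrees_eq_twice_card_edges
    set Bad := (univ : Finset V).filter (fun v => k + 4 ≤ G.degree v) with hBaddef
    set notBad := (univ : Finset V).filter (fun v => ¬ k + 4 ≤ G.degree v) with hnotBaddef
    have hbadcard : Bad.card ≤ k - 1 := by
      have hlow : Bad.card • (k + 4) ≤ ∑ v ∈ Bad, G.degree v :=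
        Finset.card_nsmul_le_sum Bad _ _ (fun v hv => (Finset.mem_filter.mp hv).2)
      have hlow2 : notBad.card • (k + 3) ≤ ∑ v ∈ notBad, G.degree v :=
        Finset.card_nsmul_le_sum notBad _ _ (fun v _ => hdeg v)
      have hsplitsum : (∑ v ∈ Bad, G.degree v) + (∑ v ∈ notBad, G.degree v)
          = ∑ v, G.degree v :=
        Finset.sum_filter_add_sum_filter_not (univ : Finset V) _ _
      have hsplitcard : Bad.card + notBad.card = n := by
        have := Finset.card_filter_add_card_filter_not
          (s := (univ : Finset V)) (p := fun v => k + 4 ≤ G.degree v)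
        rw [Finset.card_univ] at this
        exact this
      have hkey : (k + 3) * n + Bad.card ≤ (k + 3) * n + (k - 1) := by
        calc (k + 3) * n + Bad.card = Bad.card * (k + 4) + notBad.card * (k + 3) := by
              rw [← hsplitcard]; ring
          _ ≤ (∑ v ∈ Bad, G.degree v) + (∑ v ∈ notBad, G.degree v) :=
              Nat.add_le_add (by simpa [smul_eq_mul, mul_comm] using hlow)
                (by simpa [smul_eq_mul, mul_comm] using hlow2)
          _ = ∑ v, G.degree v := hsplitsum
          _ = 2 * G.edgeFinset.card := hsum
          _ ≤ (k + 3) * n + (k - 1) := h2m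
      omega
    set A := Tf.filter (fun v => G.degree v = k + 3) with hAdef
    have hA3 : 3 ≤ A.card := by
      have hsub : Tf.filter (fun v => ¬ G.degree v = k + 3) ⊆ Bad := by
        intro v hv
        obtain ⟨hv1, hv2⟩ := Finset.mem_filter.mp hv
        refine Finset.mem_filter.mpr ⟨Finset.mem_univ _, ?_⟩
        have := hdeg v
        omega
      have h1 := Finset.card_le_card hsub
      have hsplit : A.card + (Tf.filter (fun v => ¬ G.degree v = k + 3)).card = Tf.card :=
        Finset.card_filter_add_card_filter_not
          (s := Tf) (p := fun v => G.degree v = k + 3)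
      omega
    have hATf : A ⊆ Tf := Finset.filter_subset _ _
    have hAS : A ⊆ S := hATf.trans hTfS
    -- extract the two sides P, Q
    unfold SimpleGraph.IsCutset at hScut
    rw [SimpleGraph.Preconnected] at hScut
    push_neg at hScut
    obtain ⟨a, b, hab⟩ := hScut
    set Pset : Set V := {y | ∃ h : y ∈ ((↑S : Set V)ᶜ), (G.induce _).Reachable a ⟨y, h⟩}
      with hPsetdef
    have haP : (↑a : V) ∈ Pset := ⟨a.2, by exact SimpleGraph.Reachable.refl _⟩
    have hbP : (↑b : V) ∉ Pset := by
      rintro ⟨h, hr⟩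
      exact hab (by convert hr)
    set Pf := (univ \ S).filter (· ∈ Pset) with hPfdef
    set Qf := (univ \ S).filter (· ∉ Pset) with hQfdef
    have hPS : ∀ x ∈ Pf, x ∉ S := fun x hx =>
      (Finset.mem_sdiff.mp (Finset.mem_filter.mp hx).1).2
    have hQS : ∀ x ∈ Qf, x ∉ S := fun x hx =>
      (Finset.mem_sdiff.mp (Finset.mem_filter.mp hx).1).2
    have hPQ : ∀ y ∈ Pf, ∀ z ∈ Qf, ¬ G.Adj y z := by
      intro y hy z hz hadj
      obtain ⟨hyc, hr⟩ := (Finset.mem_filter.mp hy).2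
      have hzS : z ∉ S := hQS z hz
      have hzc : z ∈ ((↑S : Set V)ᶜ) := by simpa using hzS
      have hadj' : (G.induce ((↑S : Set V)ᶜ)).Adj ⟨y, hyc⟩ ⟨z, hzc⟩ := by
        simpa using hadj
      exact (Finset.mem_filter.mp hz).2 ⟨hzc, hr.trans hadj'.reachable⟩
    have hQP : ∀ y ∈ Qf, ∀ z ∈ Pf, ¬ G.Adj y z := fun y hy z hz hadj =>
      hPQ z hz y hy hadj.symm
    have hcover : ∀ y, y ∉ S → y ∈ Pf ∨ y ∈ Qf := by
      intro y hy
      by_cases h : y ∈ Pset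
      · exact Or.inl (Finset.mem_filter.mpr ⟨Finset.mem_sdiff.mpr ⟨Finset.mem_univ _, hy⟩, h⟩)
      · exact Or.inr (Finset.mem_filter.mpr ⟨Finset.mem_sdiff.mpr ⟨Finset.mem_univ _, hy⟩, h⟩)
    have hdisjPQ : ∀ y ∈ Qf, y ∉ Pf := by
      intro y hy hyP
      exact (Finset.mem_filter.mp hy).2 (Finset.mem_filter.mp hyP).2
    have hdisjQP : ∀ y ∈ Pf, y ∉ Qf := by
      intro y hy hyQ
      exact (Finset.mem_filter.mp hyQ).2 (Finset.mem_filter.mp hy).2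
    have haS : (↑a : V) ∉ S := fun h => a.2 (Finset.mem_coe.mpr h)
    have hbS : (↑b : V) ∉ S := fun h => b.2 (Finset.mem_coe.mpr h)
    have hPne : Pf.Nonempty :=
      ⟨↑a, Finset.mem_filter.mpr ⟨Finset.mem_sdiff.mpr ⟨Finset.mem_univ _, haS⟩, haP⟩⟩
    have hQne : Qf.Nonempty :=
      ⟨↑b, Finset.mem_filter.mpr ⟨Finset.mem_sdiff.mpr ⟨Finset.mem_univ _, hbS⟩, hbP⟩⟩
    -- each vertex of A has exactly 1 neighbour in each side, k+1 in S
    have hnbrP : ∀ s ∈ S, (G.neighborFinset s ∩ Pf).Nonempty := fun s hs =>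
      nbr_side G S Pf Qf hmin hPS hQS hPQ hdisjPQ hcover hPne hQne s hs
    have hnbrQ : ∀ s ∈ S, (G.neighborFinset s ∩ Qf).Nonempty := fun s hs =>
      nbr_side G S Qf Pf hmin hQS hPS hQP hdisjQP
        (fun y hy => (hcover y hy).symm) hQne hPne s hs
    have hsplitdeg : ∀ v ∈ A,
        (G.neighborFinset v ∩ Pf).card = 1 ∧ (G.neighborFinset v ∩ Qf).card = 1 ∧
        (G.neighborFinset v ∩ S).card = k + 1 := by
      intro v hv
      obtain ⟨hvTf, hvdeg⟩ := Finset.mem_filter.mp hv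
      have hvS : v ∈ S := hTfS hvTf
      have hdecomp : (G.neighborFinset v ∩ S).card + (G.neighborFinset v ∩ Pf).card
          + (G.neighborFinset v ∩ Qf).card = k + 3 := by
        have hun : G.neighborFinset v =
            (G.neighborFinset v ∩ S) ∪ (G.neighborFinset v ∩ Pf) ∪ (G.neighborFinset v ∩ Qf) := by
          ext y
          simp only [Finset.mem_union, Finset.mem_inter]
          constructor
          · intro hy
            by_cases h : y ∈ S
            · exact Or.inl (Or.inl ⟨hy, h⟩)
            · rcases hcover y h with h1 | h1
              · exact Or.inl (Or.inr ⟨hy, h1⟩)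
              · exact Or.inr ⟨hy, h1⟩
          · rintro (⟨h, _⟩ | ⟨h, _⟩) <;> try exact h
            rcases ‹_ ∧ _› with ⟨h, _⟩
            exact h
        have hd1 : Disjoint (G.neighborFinset v ∩ S) (G.neighborFinset v ∩ Pf) := by
          rw [Finset.disjoint_left]
          intro y hy1 hy2
          exact hPS y (Finset.mem_inter.mp hy2).2 (Finset.mem_inter.mp hy1).2
        have hd2 : Disjoint ((G.neighborFinset v ∩ S) ∪ (G.neighborFinset v ∩ Pf))
            (G.neighborFinset v ∩ Qf) := by
          rw [Finset.disjoint_left]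
          intro y hy1 hy2
          have hyQ := (Finset.mem_inter.mp hy2).2
          rcases Finset.mem_union.mp hy1 with h1 | h1
          · exact hQS y hyQ (Finset.mem_inter.mp h1).2
          · exact hdisjPQ y hyQ (Finset.mem_inter.mp h1).2
        have := congrArg Finset.card hun
        rw [Finset.card_union_of_disjoint hd2, Finset.card_union_of_disjoint hd1,
          G.card_neighborFinset_eq_degree, hvdeg] at this
        omega
      have h1 : k + 1 ≤ (G.neighborFinset v ∩ S).card := by
        have hsub : G.neighborFinset v ∩ Tf ⊆ G.neighborFinset v ∩ S :=
          Finset.inter_subset_inter_left hTfS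
        have := Finset.card_le_card hsub
        have := hdegT v hvTf
        omega
      obtain ⟨yP, hyP⟩ := hnbrP v hvS
      obtain ⟨yQ, hyQ⟩ := hnbrQ v hvS
      have h2 : 1 ≤ (G.neighborFinset v ∩ Pf).card := Finset.card_pos.mpr ⟨yP, hyP⟩
      have h3 : 1 ≤ (G.neighborFinset v ∩ Qf).card := Finset.card_pos.mpr ⟨yQ, hyQ⟩
      omega
    -- one of the sides has at least two vertices
    have hsidecard : 3 ≤ Pf.card + Qf.card := by
      have hsplit : Pf.card + Qf.card = (univ \ S).card :=
        Finset.card_filter_add_card_filter_not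
          (s := univ \ S) (p := (· ∈ Pset))
      have hcardsdiff : (univ \ S).card = n - S.card := by
        rw [Finset.card_sdiff_of_subset (Finset.subset_univ S), Finset.card_univ]
      omega
    rcases le_or_gt 2 Pf.card with hP2 | hP2
    · exact main_contra G k S Pf Qf A hmin hemin hPS hQS hPQ hcover hP2 hAS hA3 hκ
        (fun v hv => (hsplitdeg v hv).1) (fun v hv => (hsplitdeg v hv).2.2)
    · have hQ2 : 2 ≤ Qf.card := by omega
      exact main_contra G k S Qf Pf A hmin hemin hQS hPS hQP
        (fun y hy => (hcover y hy).symm) hQ2 hAS hA3 hκ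
        (fun v hv => (hsplitdeg v hv).2.1) (fun v hv => (hsplitdeg v hv).2.2)
end

section
/- Let k be a positive integer and let G be a finite simple graph of order n at least 2k+2 that has no k-degenerate cut. If u is a vertex of G of degree at most k + √k/5, then u has at least k − 2k/25 − 2√k/5 neighbors whose degree in G is at least k + √k/5. -/
open Finset

namespace SimpleGraph

variable {V : Type*} (G : SimpleGraph V)

def outerBoundary (C : Set V) : Set V := {z | z ∉ C ∧ ∃ y ∈ C, G.Adj y z}

def HasMinDegreeGT [DecidableRel G.Adj] (k : ℕ) (R : Finset V) : Prop :=
  ∀ w ∈ R, k < #{x ∈ R | G.Adj w x}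

variable {G}

lemma mem_of_walk_of_outerBoundary_subset {C S : Set V} (hCS : G.outerBoundary C ⊆ S)
    {a b : ↥Sᶜ} (p : (G.induce Sᶜ).Walk a b) (ha : ↑a ∈ C) : ↑b ∈ C := by
  induction p with
  | nil => exact ha
  | @cons a c b hac p ih =>
    refine ih ?_
    by_contra hc
    exact c.2 (hCS ⟨hc, a, ha, hac⟩)

lemma isCutset_outerBoundary {C : Set V} {x f : V} (hx : x ∈ C) (hf : f ∉ C)
    (hfC : ∀ y ∈ C, ¬ G.Adj y f) : G.IsCutset (G.outerBoundary C) := by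
  intro hconn
  have hxS : x ∉ G.outerBoundary C := fun h => h.1 hx
  have hfS : f ∉ G.outerBoundary C := fun ⟨_, y, hy, hyf⟩ => hfC y hy hyf
  obtain ⟨p⟩ := hconn ⟨x, hxS⟩ ⟨f, hfS⟩
  exact hf (mem_of_walk_of_outerBoundary_subset le_rfl p hx)

variable [DecidableRel G.Adj]

lemma exists_hasMinDegreeGT_of_not_degenSet {k : ℕ} {S : Set V} (hS : S.Finite)
    (h : ¬ G.DegenSet k S) : ∃ R : Finset V, R.Nonempty ∧ ↑R ⊆ S ∧ G.HasMinDegreeGT k R := by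
  simp only [DegenSet, not_forall, not_exists, not_and, not_le] at h
  obtain ⟨R, hRS, hR, hdeg⟩ := h
  obtain ⟨R, rfl⟩ := (hS.subset hRS).exists_finset_coe
  refine ⟨R, Finset.coe_nonempty.mp hR, hRS, fun w hw => ?_⟩
  simpa [← Finset.coe_filter, Set.ncard_coe_finset] using hdeg w hw

lemma exists_hasMinDegreeGT_subset_outerBoundary [Finite V] {k : ℕ}
    (hcut : ¬ ∃ S : Set V, G.IsCutset S ∧ G.DegenSet k S) {C : Set V} {x f : V}
    (hx : x ∈ C) (hf : f ∉ C) (hfC : ∀ y ∈ C, ¬ G.Adj y f) :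
    ∃ R : Finset V, R.Nonempty ∧ ↑R ⊆ G.outerBoundary C ∧ G.HasMinDegreeGT k R :=
  exists_hasMinDegreeGT_of_not_degenSet (Set.toFinite _)
    fun hdeg => hcut ⟨_, isCutset_outerBoundary hx hf hfC, hdeg⟩

variable [DecidableEq V]

lemma card_filter_adj_add_card_filter_adj_le_degree [Fintype V] {X Y : Finset V} (hXY : Disjoint X Y)
    (w : V) : #{x ∈ X | G.Adj w x} + #{x ∈ Y | G.Adj w x} ≤ G.degree w := by
  rw [← Finset.card_union_of_disjoint (Finset.disjoint_filter_filter hXY), ← Finset.filter_union,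
    ← card_neighborFinset_eq_degree]
  exact Finset.card_le_card fun x hx => (G.mem_neighborFinset w x).mpr (Finset.mem_filter.mp hx).2

namespace HasMinDegreeGT

variable {k : ℕ} {T : Finset V}

lemma add_two_le_card (hT : G.HasMinDegreeGT k T) (hTne : T.Nonempty) : k + 2 ≤ #T := by
  obtain ⟨v, hv⟩ := hTne
  have hsub : {x ∈ T | G.Adj v x} ⊆ T.erase v := fun x hx => by
    rw [Finset.mem_filter] at hx
    exact Finset.mem_erase.mpr ⟨(G.ne_of_adj hx.2).symm, hx.1⟩
  have h₁ := Finset.card_le_card hsub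
  rw [Finset.card_erase_of_mem hv] at h₁
  have h₂ := hT v hv
  omega

lemma card_add_le_card_add_card_filter_adj (hT : G.HasMinDegreeGT k T) {w : V} (hw : w ∈ T)
    {J : Finset V} (hJT : J ⊆ T) (hwJ : w ∉ J) :
    #J + (k + 2) ≤ #T + #{x ∈ J | G.Adj w x} := by
  have hsub : {x ∈ J | ¬ G.Adj w x} ⊆ {x ∈ T | ¬ G.Adj w x}.erase w := fun x hx => by
    rw [Finset.mem_filter] at hx
    exact Finset.mem_erase.mpr
      ⟨ne_of_mem_of_not_mem hx.1 hwJ, Finset.mem_filter.mpr ⟨hJT hx.1, hx.2⟩⟩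
  have hwT : w ∈ {x ∈ T | ¬ G.Adj w x} := Finset.mem_filter.mpr ⟨hw, G.irrefl⟩
  have h₁ := Finset.card_le_card hsub
  rw [Finset.card_erase_of_mem hwT] at h₁
  have h₂ : #{x ∈ J | G.Adj w x} + #{x ∈ J | ¬ G.Adj w x} = #J :=
    Finset.card_filter_add_card_filter_not _
  have h₃ : #{x ∈ T | G.Adj w x} + #{x ∈ T | ¬ G.Adj w x} = #T :=
    Finset.card_filter_add_card_filter_not _
  have h₄ := hT w hw
  have h₅ := Finset.card_pos.mpr ⟨w, hwT⟩
  omega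

variable [Fintype V]

lemma card_neighborFinset_sdiff_add_le_degree (hT : G.HasMinDegreeGT k T) {u : V}
    (hTu : T ⊆ G.neighborFinset u) {v : V} (hv : v ∈ T) :
    #(G.neighborFinset v \ insert u (G.neighborFinset u)) + (k + 2) ≤ G.degree v := by
  have huT : u ∉ {x ∈ T | G.Adj v x} := fun h =>
    G.irrefl ((G.mem_neighborFinset u u).mp (hTu (Finset.mem_filter.mp h).1))
  have hsub : insert u {x ∈ T | G.Adj v x} ⊆
      G.neighborFinset v ∩ insert u (G.neighborFinset u) := by
    intro x hx
    simp only [Finset.mem_insert, Finset.mem_filter, Finset.mem_inter, mem_neighborFinset] at hx ⊢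
    rcases hx with rfl | ⟨hxT, hvx⟩
    · exact ⟨((G.mem_neighborFinset _ _).mp (hTu hv)).symm, Or.inl rfl⟩
    · exact ⟨hvx, Or.inr ((G.mem_neighborFinset _ _).mp (hTu hxT))⟩
  have h₁ := Finset.card_le_card hsub
  rw [Finset.card_insert_of_notMem huT] at h₁
  have h₂ := Finset.card_sdiff_add_card_inter (G.neighborFinset v) (insert u (G.neighborFinset u))
  rw [card_neighborFinset_eq_degree] at h₂
  have h₃ := hT v hv
  omega

-- `w` is adjacent to `u`, to more than `k` vertices of `R`, and to all but at most
-- `#T - (k + 2)` vertices of `J`.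
lemma card_add_le_card_add_degree (hT : G.HasMinDegreeGT k T) {u : V}
    (hTu : T ⊆ G.neighborFinset u) {J R : Finset V} (hJT : J ⊆ T) (hR : G.HasMinDegreeGT k R)
    (hJR : Disjoint (insert u J) R) {w : V} (hwT : w ∈ T) (hwR : w ∈ R) :
    #J + 2 * k + 4 ≤ #T + G.degree w := by
  have huJ : u ∉ J := fun h => G.irrefl ((G.mem_neighborFinset u u).mp (hTu (hJT h)))
  have h₁ := card_filter_adj_add_card_filter_adj_le_degree (G := G) hJR w
  rw [Finset.filter_insert, if_pos ((G.mem_neighborFinset _ _).mp (hTu hwT)).symm,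
    Finset.card_insert_of_notMem fun h => huJ (Finset.mem_filter.mp h).1] at h₁
  have h₂ := hT.card_add_le_card_add_card_filter_adj hwT hJT
    fun h => Finset.disjoint_left.mp hJR (Finset.mem_insert_of_mem h) hwR
  have h₃ := hR w hwR
  omega

end HasMinDegreeGT

variable [Fintype V]

lemma mem_insert_neighborFinset_union_biUnion {u z : V} {J : Finset V}
    (hJu : J ⊆ G.neighborFinset u) (hz : z ∈ insert u J ∨ ∃ y ∈ insert u J, G.Adj y z) :
    z ∈ insert u (G.neighborFinset u ∪
      J.biUnion fun v => G.neighborFinset v \ insert u (G.neighborFinset u)) := by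
  by_cases hzu : z ∈ insert u (G.neighborFinset u)
  · rw [← Finset.insert_union]
    exact Finset.mem_union_left _ hzu
  refine Finset.mem_insert_of_mem (Finset.mem_union_right _ (Finset.mem_biUnion.mpr ?_))
  rcases hz with hz | ⟨y, hy, hyz⟩
  · rcases Finset.mem_insert.mp hz with rfl | hz
    · exact absurd (Finset.mem_insert_self _ _) hzu
    · exact absurd (Finset.mem_insert_of_mem (hJu hz)) hzu
  · rcases Finset.mem_insert.mp hy with rfl | hy
    · exact absurd (Finset.mem_insert_of_mem ((G.mem_neighborFinset _ _).mpr hyz)) hzu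
    · exact ⟨y, hy, Finset.mem_sdiff.mpr ⟨(G.mem_neighborFinset _ _).mpr hyz, hzu⟩⟩

lemma exists_hasMinDegreeGT_subset_neighborFinset {k : ℕ}
    (hcut : ¬ ∃ S : Set V, G.IsCutset S ∧ G.DegenSet k S) {u : V}
    (hu : G.degree u + 1 < Fintype.card V) :
    ∃ T ⊆ G.neighborFinset u, T.Nonempty ∧ G.HasMinDegreeGT k T := by
  have hcard : #(insert u (G.neighborFinset u)) < #(Finset.univ : Finset V) :=
    (Finset.card_insert_le _ _).trans_lt hu
  obtain ⟨f, -, hf⟩ := Finset.exists_mem_notMem_of_card_lt_card hcard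
  rw [Finset.mem_insert, mem_neighborFinset, not_or] at hf
  obtain ⟨T, hT, hTC, hdeg⟩ := exists_hasMinDegreeGT_subset_outerBoundary hcut
    (Set.mem_singleton u) hf.1 (fun y hy => by rw [Set.mem_singleton_iff.mp hy]; exact hf.2)
  refine ⟨T, fun w hw => ?_, hT, hdeg⟩
  obtain ⟨-, y, hy, hyw⟩ := hTC hw
  rw [Set.mem_singleton_iff.mp hy] at hyw
  exact (G.mem_neighborFinset u w).mpr hyw

lemma add_two_le_degree {k : ℕ} (hcut : ¬ ∃ S : Set V, G.IsCutset S ∧ G.DegenSet k S)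
    (hn : k + 3 ≤ Fintype.card V) (u : V) : k + 2 ≤ G.degree u := by
  by_cases hu : G.degree u + 1 < Fintype.card V
  · obtain ⟨T, hTu, hTne, hT⟩ := exists_hasMinDegreeGT_subset_neighborFinset hcut hu
    exact (hT.add_two_le_card hTne).trans
      ((Finset.card_le_card hTu).trans (card_neighborFinset_eq_degree G u).le)
  · omega

lemma add_two_le_card_filter_add_of_low_subset {k a : ℕ}
    (hcut : ¬ ∃ S : Set V, G.IsCutset S ∧ G.DegenSet k S) {u : V}
    (hu : G.degree u ≤ k + 2 + a) (hn : k + 2 * a ^ 2 + a + 3 < Fintype.card V)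
    {T : Finset V} (hTu : T ⊆ G.neighborFinset u) (hTne : T.Nonempty)
    (hT : G.HasMinDegreeGT k T) {J : Finset V} (hJT : J ⊆ T)
    (hJlow : ∀ v ∈ J, G.degree v < k + 2 + a) (hJ : #J + (k + 2) = #T + a) :
    k + 2 ≤ #{v ∈ G.neighborFinset u | k + 2 + a ≤ G.degree v} + a * (2 * a + 1) := by
  set N := G.neighborFinset u
  set E := J.biUnion fun v => G.neighborFinset v \ insert u N
  have hclosed : ∀ z, (z ∈ insert u J ∨ ∃ y ∈ insert u J, G.Adj y z) → z ∈ insert u (N ∪ E) :=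
    fun z => mem_insert_neighborFinset_union_biUnion (hJT.trans hTu)
  have hTN : #T ≤ #N := Finset.card_le_card hTu
  have hNu : #N = G.degree u := card_neighborFinset_eq_degree G u
  have hE : #E ≤ #J * a := Finset.card_biUnion_le_card_mul _ _ _ fun v hv => by
    have : #(G.neighborFinset v \ insert u N) + (k + 2) ≤ G.degree v :=
      hT.card_neighborFinset_sdiff_add_le_degree hTu (hJT hv)
    have := hJlow v hv
    omega
  have hJa : #J * a ≤ 2 * a ^ 2 := by
    rw [sq, ← mul_assoc]
    exact Nat.mul_le_mul_right a (by omega)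
  obtain ⟨f, -, hf⟩ := Finset.exists_mem_notMem_of_card_lt_card
    (s := insert u (N ∪ E)) (t := Finset.univ) <| by
      have := Finset.card_insert_le u (N ∪ E)
      have := Finset.card_union_le N E
      rw [Finset.card_univ]
      omega
  obtain ⟨R, hRne, hRC, hR⟩ := exists_hasMinDegreeGT_subset_outerBoundary hcut
    (C := ↑(insert u J)) (Finset.mem_coe.mpr (Finset.mem_insert_self u J))
    (fun h => hf (hclosed f (Or.inl h))) (fun y hy hyf => hf (hclosed f (Or.inr ⟨y, hy, hyf⟩)))
  have hhigh : ∀ w ∈ R, w ∈ T → k + 2 + a ≤ G.degree w := fun w hwR hwT => by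
    have := hT.card_add_le_card_add_degree hTu hJT hR
      (Finset.disjoint_left.mpr fun x hx hxR => (hRC hxR).1 hx) hwT hwR
    omega
  have hRsub : R ⊆ {v ∈ N | k + 2 + a ≤ G.degree v} ∪ (N \ T) ∪ E := fun w hw => by
    obtain ⟨hwC, hadj⟩ := hRC hw
    have hwu : w ≠ u := fun h => hwC (h ▸ Finset.mem_insert_self u J)
    have hw' := Finset.mem_of_mem_insert_of_ne (hclosed w (Or.inr hadj)) hwu
    simp only [Finset.mem_union, Finset.mem_filter, Finset.mem_sdiff] at hw' ⊢
    by_cases hwT : w ∈ T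
    · rcases hw' with hwN | hwE
      · exact Or.inl (Or.inl ⟨hwN, hhigh w hw hwT⟩)
      · exact Or.inr hwE
    · tauto
  have hcount := (Finset.card_le_card hRsub).trans
    ((Finset.card_union_le _ _).trans (Nat.add_le_add_right (Finset.card_union_le _ _) _))
  rw [Finset.card_sdiff_of_subset hTu] at hcount
  have := hR.add_two_le_card hRne
  have := hT.add_two_le_card hTne
  have : a * (2 * a + 1) = 2 * a ^ 2 + a := by ring
  omega

theorem add_two_le_card_filter_neighborFinset_add {k a : ℕ}
    (hcut : ¬ ∃ S : Set V, G.IsCutset S ∧ G.DegenSet k S)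
    (hn : k + 2 * a ^ 2 + a + 3 < Fintype.card V) {u : V} (hu : G.degree u ≤ k + 2 + a) :
    k + 2 ≤ #{v ∈ G.neighborFinset u | k + 2 + a ≤ G.degree v} + a * (2 * a + 1) := by
  obtain ⟨T, hTu, hTne, hT⟩ := exists_hasMinDegreeGT_subset_neighborFinset hcut (u := u) (by omega)
  have hTk := hT.add_two_le_card hTne
  by_cases hA : #T + a ≤ #{v ∈ T | G.degree v < k + 2 + a} + (k + 2)
  · obtain ⟨J, hJA, hJ⟩ := Finset.exists_subset_card_eq
      (s := {v ∈ T | G.degree v < k + 2 + a}) (n := #T + a - (k + 2)) (by omega)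
    exact add_two_le_card_filter_add_of_low_subset hcut hu hn hTu hTne hT
      (hJA.trans (Finset.filter_subset _ _)) (fun v hv => (Finset.mem_filter.mp (hJA hv)).2)
      (by omega)
  · have hhigh : {v ∈ T | ¬ G.degree v < k + 2 + a} ⊆
        {v ∈ G.neighborFinset u | k + 2 + a ≤ G.degree v} := fun v hv => by
      rw [Finset.mem_filter, not_lt] at hv
      exact Finset.mem_filter.mpr ⟨hTu hv.1, hv.2⟩
    have h₁ := Finset.card_le_card hhigh
    have h₂ : #{v ∈ T | G.degree v < k + 2 + a} + #{v ∈ T | ¬ G.degree v < k + 2 + a} = #T :=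
      Finset.card_filter_add_card_filter_not _
    have h₃ : a ≤ a * (2 * a + 1) := Nat.le_mul_of_pos_right a (by omega)
    omega

end SimpleGraph

lemma add_le_natCast_iff_add_ceil_le {s : ℝ} (hs : 0 ≤ s) (k d : ℕ) :
    (k : ℝ) + s ≤ d ↔ k + ⌈s⌉₊ ≤ d := by
  rw [← Nat.ceil_le, add_comm (k : ℝ), Nat.ceil_add_natCast hs, add_comm]

lemma exists_ceil_eq_add_two {s : ℝ} (hs : 2 ≤ s) : ∃ a : ℕ, ⌈s⌉₊ = a + 2 ∧ (a : ℝ) + 1 < s := by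
  have h₁ : 1 < ⌈s⌉₊ := Nat.lt_ceil.mpr (by norm_num; linarith)
  refine ⟨⌈s⌉₊ - 2, by omega, ?_⟩
  have h₂ := Nat.ceil_lt_add_one (show 0 ≤ s by linarith)
  rw [Nat.cast_sub (by omega), Nat.cast_two]
  linarith

theorem stmt4 {V : Type*} [Fintype V] (G : SimpleGraph V) [DecidableRel G.Adj]
    (k : ℕ) (hk : 1 ≤ k) (hn : 2 * k + 2 ≤ Fintype.card V)
    (hcut : ¬ ∃ S : Set V, G.IsCutset S ∧ G.DegenSet k S)
    (u : V) (hu : (G.degree u : ℝ) ≤ (k : ℝ) + Real.sqrt k / 5) :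
    (k : ℝ) - 2 * (k : ℝ) / 25 - 2 * Real.sqrt k / 5
      ≤ ({v ∈ G.neighborSet u | (k : ℝ) + Real.sqrt k / 5 ≤ (G.degree v : ℝ)}.ncard : ℝ) := by
  classical
  set s := Real.sqrt k / 5 with hs
  have hks : (k : ℝ) = 25 * s ^ 2 := by
    rw [hs, div_pow, Real.sq_sqrt (Nat.cast_nonneg k)]
    ring
  have hs2 : 2 ≤ s := by
    have : (k : ℝ) + 2 ≤ G.degree u := by exact_mod_cast G.add_two_le_degree hcut (by omega) u
    linarith
  obtain ⟨a, ha, has⟩ := exists_ceil_eq_add_two hs2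
  have hu' : G.degree u ≤ k + 2 + a := by
    have : (G.degree u : ℝ) ≤ k + ⌈s⌉₊ := hu.trans (by gcongr; exact Nat.le_ceil s)
    rw [ha, Nat.cast_add, Nat.cast_two] at this
    exact_mod_cast (by linarith : (G.degree u : ℝ) ≤ k + 2 + a)
  have hn' : k + 2 * a ^ 2 + a + 3 < Fintype.card V := by
    have : (a : ℝ) ^ 2 < (s - 1) ^ 2 := pow_lt_pow_left₀ (by linarith) (by positivity) two_ne_zero
    have : (k : ℝ) + 2 * a ^ 2 + a + 3 < 2 * k + 2 := by nlinarith
    exact_mod_cast this.trans_le (by exact_mod_cast hn : (2 * k + 2 : ℝ) ≤ Fintype.card V)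
  have hH : {v ∈ G.neighborSet u | (k : ℝ) + s ≤ (G.degree v : ℝ)} =
      ↑({v ∈ G.neighborFinset u | k + 2 + a ≤ G.degree v} : Finset V) := by
    ext v
    simp [add_le_natCast_iff_add_ceil_le (show 0 ≤ s by linarith), ha, add_assoc, add_comm a]
  have key : ((k + 2 : ℕ) : ℝ) ≤ ((_ + a * (2 * a + 1) : ℕ) : ℝ) :=
    Nat.cast_le.mpr (G.add_two_le_card_filter_neighborFinset_add hcut hn' hu')
  rw [hH, Set.ncard_coe_finset, show 2 * (k : ℝ) / 25 = 2 * s ^ 2 by rw [hks]; ring,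
    show 2 * Real.sqrt k / 5 = 2 * s by ring]
  push_cast at key
  nlinarith
end

section
/- For every integer k at least 2 and every integer s at least 3, there exists a connected finite simple graph G of order n = (k+2)·s + 1 and size m = ((k+3)/2)·n + (k−1)/2 + 1 such that no minimum cut of G is k-degenerate. (Such a graph G arises from s disjoint (k+2)-cliques C_0, …, C_{s−1} arranged in cyclic order by adding, for each i, a perfect matching of size k+2 between C_i and C_{i+1} (indices modulo s), and adding one further vertex u joined to all k+2 vertices of C_0; its only minimum cut is N_G(u) = C_0, which is a clique of order k+2 and hence not k-degenerate.) -/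
/-!
Take the box product `C_s □ K_{k+2}` (the cliques `C_i` joined cyclically by perfect matchings)
and add an apex adjacent to the clique `C_0`. Deleting at most `k + 2` vertices never
disconnects `C_s □ K_{k+2}`: either some colour class, a copy of `C_s`, survives entirely and
every remaining vertex shares a clique with it, or every colour loses exactly one vertex, so each
colour class is a path and two of them meet in a clique that lost neither of their vertices.
A minimum cut has at most `|C_0| = k + 2` vertices, so it separates the apex only by containing
all of `C_0`, a `(k + 2)`-clique, which is not `k`-degenerate.
-/

theorem Sym2.map_some_ne_mk_none {V : Type*} (e : Sym2 V) (z : Option V) :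
    Sym2.map some e ≠ s(none, z) := fun h => by
  have hmem : none ∈ Sym2.map some e := h ▸ Sym2.mem_mk_left none z
  simp [Sym2.mem_map] at hmem

namespace SimpleGraph

variable {V : Type*}

def addApex (H : SimpleGraph V) (A : Set V) : SimpleGraph (Option V) where
  Adj
    | some x, some y => H.Adj x y
    | none, some y => y ∈ A
    | some x, none => x ∈ A
    | none, none => False
  symm := ⟨by
    rintro (_ | x) (_ | y) h
    exacts [h, h, h, h.symm]⟩
  loopless := ⟨by
    rintro (_ | x) h
    exacts [h, H.loopless.irrefl x h]⟩

section AddApex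

variable {H : SimpleGraph V} {A : Set V}

@[simp] theorem addApex_adj_some_some {x y : V} : (H.addApex A).Adj (some x) (some y) ↔ H.Adj x y :=
  Iff.rfl

@[simp] theorem addApex_adj_none_some {y : V} : (H.addApex A).Adj none (some y) ↔ y ∈ A :=
  Iff.rfl

theorem edgeSet_addApex :
    (H.addApex A).edgeSet = Sym2.map some '' H.edgeSet ∪ (fun a => s(none, some a)) '' A := by
  ext e
  induction e using Sym2.ind with
  | h x y =>
    rcases x with _ | x <;> rcases y with _ | y
    · simp [Sym2.map_some_ne_mk_none]
    · simp [Sym2.map_some_ne_mk_none]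
    · simp [Sym2.eq_swap (a := some x), Sym2.map_some_ne_mk_none]
    · have hsome := (Sym2.map.injective (Option.some_injective V)).mem_set_image
        (s := H.edgeSet) (a := s(x, y))
      rw [Sym2.map_mk] at hsome
      simp [hsome]

theorem ncard_edgeSet_addApex [Finite V] :
    (H.addApex A).edgeSet.ncard = H.edgeSet.ncard + A.ncard := by
  have hdisj : Disjoint (Sym2.map some '' H.edgeSet) ((fun a => s(none, some a)) '' A) := by
    refine Set.disjoint_left.2 ?_
    rintro _ ⟨e, -, rfl⟩ ⟨a, -, h⟩
    exact Sym2.map_some_ne_mk_none e (some a) h.symm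
  rw [edgeSet_addApex, Set.ncard_union_eq hdisj,
    Set.ncard_image_of_injective _ (Sym2.map.injective (Option.some_injective V)),
    Set.ncard_image_of_injective _ fun a b h => Option.some_injective V (Sym2.congr_right.1 h)]

theorem connected_addApex (hH : H.Connected) (hA : A.Nonempty) : (H.addApex A).Connected := by
  obtain ⟨a, ha⟩ := hA
  let f : H →g H.addApex A := ⟨some, id⟩
  refine (connected_iff_exists_forall_reachable _).2 ⟨some a, ?_⟩
  rintro (_ | v)
  · exact (addApex_adj_none_some.2 ha).reachable.symm
  · exact (hH.preconnected a v).map f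

theorem isCutset_image_some_addApex {v : V} (hv : v ∉ A) : (H.addApex A).IsCutset (some '' A) := by
  intro hpre
  have hnone : none ∈ (some '' A)ᶜ := by simp
  have hsome : some v ∈ (some '' A)ᶜ := by simpa using hv
  obtain ⟨w⟩ := hpre ⟨none, hnone⟩ ⟨some v, hsome⟩
  cases w with
  | @cons _ x _ h _ =>
    obtain ⟨_ | y, hy⟩ := x
    exacts [h, hy ⟨y, h, rfl⟩]

theorem preconnected_induce_compl_addApex {S : Set (Option V)}
    (hH : (H.induce (some ⁻¹' S)ᶜ).Preconnected) {a : V} (ha : a ∈ A) (haS : some a ∈ Sᶜ) :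
    ((H.addApex A).induce Sᶜ).Preconnected := by
  let f : H.induce (some ⁻¹' S)ᶜ →g (H.addApex A).induce Sᶜ := ⟨fun v => ⟨some v.1, v.2⟩, id⟩
  have hreach : ∀ v : (Sᶜ : Set (Option V)), ((H.addApex A).induce Sᶜ).Reachable v ⟨some a, haS⟩
    | ⟨none, _⟩ => Adj.reachable (show (H.addApex A).Adj none (some a) from ha)
    | ⟨some v, hv⟩ => (hH ⟨v, hv⟩ ⟨a, haS⟩).map f
  exact fun v w => (hreach v).trans (hreach w).symm

theorem image_some_subset_of_minimal_isCutset_addApex [Finite V] {v : V} (hv : v ∉ A)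
    (hH : ∀ T : Set V, T.ncard ≤ A.ncard → (H.induce Tᶜ).Preconnected) {S : Set (Option V)}
    (hS : (H.addApex A).IsCutset S)
    (hmin : ∀ T : Set (Option V), (H.addApex A).IsCutset T → S.ncard ≤ T.ncard) :
    some '' A ⊆ S := by
  have hSA : S.ncard ≤ A.ncard := (hmin _ (isCutset_image_some_addApex hv)).trans
    (Set.ncard_image_of_injective _ (Option.some_injective V)).le
  have hpre : (some ⁻¹' S).ncard ≤ S.ncard :=
    Set.ncard_le_ncard_of_injOn some (fun _ h => h) (Option.some_injective V).injOn
  rintro _ ⟨a, ha, rfl⟩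
  by_contra haS
  exact hS (preconnected_induce_compl_addApex (hH _ (hpre.trans hSA)) ha haS)

theorem IsClique.image_some_addApex {T : Set V} (hT : H.IsClique T) :
    (H.addApex A).IsClique (some '' T) := by
  rintro _ ⟨x, hx, rfl⟩ _ ⟨y, hy, rfl⟩ hxy
  exact hT hx hy (by simpa using hxy)

end AddApex

theorem cycleGraph_induce_compl_singleton_connected (n : ℕ) (p : Fin (n + 2)) :
    ((cycleGraph (n + 2)).induce {p}ᶜ).Connected := by
  have hne (t : Fin (n + 1)) : p + 1 + t.castSucc ∈ ({p}ᶜ : Set (Fin (n + 2))) := by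
    have h : (1 + t.castSucc : Fin (n + 2)) ≠ 0 := by
      rw [Ne, Fin.ext_iff, Fin.val_add, Fin.val_one, Fin.val_castSucc, Fin.val_zero,
        Nat.mod_eq_of_lt (by omega)]
      omega
    simpa [add_assoc] using h
  -- The path `p + 1, p + 2, …, p + (n + 1)` runs through every vertex except `p`.
  let f : pathGraph (n + 1) →g (cycleGraph (n + 2)).induce {p}ᶜ :=
    { toFun := fun t => ⟨p + 1 + t.castSucc, hne t⟩
      map_rel' := fun {u v} h => by
        have hadj : (cycleGraph (n + 2)).Adj u.castSucc v.castSucc :=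
          pathGraph_le_cycleGraph (by simpa [pathGraph_adj] using h)
        simpa [cycleGraph_adj, add_sub_add_left_eq_sub] using hadj }
  refine (pathGraph_connected n).map f ?_
  rintro ⟨i, hi⟩
  have hlast : i - p - 1 ≠ Fin.last (n + 1) := by
    intro h
    apply hi
    have h1 := congrArg (· + 1) h
    simp only [sub_add_cancel, Fin.last_add_one, sub_eq_zero] at h1
    exact h1
  exact ⟨(i - p - 1).castPred hlast, by simp [f]⟩

theorem exists_ne_ne_of_two_lt_card {W : Type*} [Finite W] (hW : 2 < Nat.card W) (p q : W) :
    ∃ i, i ≠ p ∧ i ≠ q := by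
  have hlt : ({p, q} : Set W).ncard < (Set.univ : Set W).ncard := by
    rw [Set.ncard_univ]
    exact ((Set.ncard_insert_le p {q}).trans (by rw [Set.ncard_singleton])).trans_lt hW
  obtain ⟨i, -, hi⟩ := Set.exists_mem_notMem_of_ncard_lt_ncard hlt
  exact ⟨i, by simpa [not_or] using hi⟩

theorem not_degenSet_of_isClique {G : SimpleGraph V} {k : ℕ} {S T : Set V} (hT : G.IsClique T)
    (hTS : T ⊆ S) (hk : k + 1 < T.ncard) : ¬ G.DegenSet k S := by
  intro hdeg
  obtain ⟨v, hv, hle⟩ := hdeg T hTS (Set.nonempty_of_ncard_ne_zero (by omega))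
  have hnbr : {w ∈ T | G.Adj v w} = T \ {v} := by
    ext w
    simp only [Set.mem_sep_iff, Set.mem_sdiff, Set.mem_singleton_iff]
    exact ⟨fun h => ⟨h.1, (G.ne_of_adj h.2).symm⟩, fun h => ⟨h.1, hT hv h.1 (Ne.symm h.2)⟩⟩
  rw [hnbr, Set.ncard_sdiff_singleton_of_mem hv] at hle
  omega

theorem two_mul_ncard_edgeSet_boxProd_top {W α : Type*} [Fintype W] [Fintype α]
    {G : SimpleGraph W} [DecidableRel G.Adj] {d : ℕ} (hG : G.IsRegularOfDegree d) :
    2 * (G □ (⊤ : SimpleGraph α)).edgeSet.ncard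
      = Fintype.card W * Fintype.card α * (d + (Fintype.card α - 1)) := by
  classical
  rw [Set.ncard_eq_toFinset_card', ← edgeFinset, ← sum_degrees_eq_twice_card_edges]
  simp only [degree_boxProd, hG.degree_eq, complete_graph_degree, Finset.sum_const,
    Finset.card_univ, Fintype.card_prod, smul_eq_mul]

section BoxProdTop

variable {W α : Type*} {G : SimpleGraph W} {S : Set (W × α)}

theorem boxProd_top_adj_of_fst_eq {x y : W × α} (hxy : x ≠ y) (h : x.1 = y.1) :
    (G □ (⊤ : SimpleGraph α)).Adj x y :=
  boxProd_adj.2 (Or.inr ⟨fun h2 => hxy (Prod.ext h h2), h⟩)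

theorem isClique_boxProd_top_singleton_prod_univ (i : W) :
    (G □ (⊤ : SimpleGraph α)).IsClique ({i} ×ˢ Set.univ) :=
  fun _ hx _ hy hxy => boxProd_top_adj_of_fst_eq hxy (hx.1.trans hy.1.symm)

theorem reachable_induce_compl_boxProd_top_of_fst_eq {x y : W × α} (hx : x ∈ Sᶜ) (hy : y ∈ Sᶜ)
    (h : x.1 = y.1) : ((G □ (⊤ : SimpleGraph α)).induce Sᶜ).Reachable ⟨x, hx⟩ ⟨y, hy⟩ := by
  by_cases hxy : x = y
  · subst hxy; rfl
  · exact Adj.reachable (boxProd_top_adj_of_fst_eq hxy h)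

theorem reachable_induce_compl_boxProd_top_of_layer {P : Set W} (hP : (G.induce P).Preconnected)
    {c : α} (hPS : ∀ i ∈ P, (i, c) ∈ Sᶜ) {i j : W} (hi : i ∈ P) (hj : j ∈ P) :
    ((G □ (⊤ : SimpleGraph α)).induce Sᶜ).Reachable ⟨(i, c), hPS i hi⟩ ⟨(j, c), hPS j hj⟩ := by
  let f : G.induce P →g (G □ (⊤ : SimpleGraph α)).induce Sᶜ :=
    { toFun := fun v => ⟨(v.1, c), hPS v.1 v.2⟩
      map_rel' := fun h => boxProd_adj.2 (Or.inl ⟨h, rfl⟩) }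
  exact (hP ⟨i, hi⟩ ⟨j, hj⟩).map f

theorem preconnected_induce_compl_boxProd_top [Finite W] [Finite α]
    (hW : 2 < Nat.card W) (hG : ∀ p, (G.induce {p}ᶜ).Preconnected)
    (hS : S.ncard ≤ Nat.card α) : ((G □ (⊤ : SimpleGraph α)).induce Sᶜ).Preconnected := by
  rintro ⟨⟨x, a⟩, hxa⟩ ⟨⟨y, b⟩, hyb⟩
  by_cases hclean : ∃ c, ∀ i, (i, c) ∈ Sᶜ
  · obtain ⟨c, hc⟩ := hclean
    obtain ⟨p, hpx, hpy⟩ := exists_ne_ne_of_two_lt_card hW x y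
    exact (reachable_induce_compl_boxProd_top_of_fst_eq hxa (hc x) rfl).trans <|
      (reachable_induce_compl_boxProd_top_of_layer (hG p) (fun i _ => hc i) hpx.symm hpy.symm).trans
      (reachable_induce_compl_boxProd_top_of_fst_eq (hc y) hyb rfl)
  · simp only [not_exists, not_forall, Set.mem_compl_iff, not_not] at hclean
    -- Pigeonhole: every colour meets `S` and `S` has at most as many elements as there are
    -- colours, so every colour meets `S` exactly once.
    have hinj : S.InjOn Prod.snd := by
      refine Set.injOn_of_ncard_image_eq (le_antisymm (Set.ncard_image_le) ?_)
      have himage : Prod.snd '' S = Set.univ :=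
        Set.eq_univ_of_forall fun c => let ⟨i, hi⟩ := hclean c; ⟨(i, c), hi, rfl⟩
      rwa [himage, Set.ncard_univ]
    choose p hp using hclean
    have hlayer (c : α) : ∀ i ∈ ({p c}ᶜ : Set W), (i, c) ∈ Sᶜ :=
      fun i hi hiS => hi (congrArg Prod.fst (hinj hiS (hp c) rfl :))
    obtain ⟨i, hia, hib⟩ := exists_ne_ne_of_two_lt_card hW (p a) (p b)
    have hx : x ≠ p a := fun h => hxa (h ▸ hp a)
    have hy : y ≠ p b := fun h => hyb (h ▸ hp b)
    exact (reachable_induce_compl_boxProd_top_of_layer (hG (p a)) (hlayer a) hx hia).trans <|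
      (reachable_induce_compl_boxProd_top_of_fst_eq (hlayer a i hia) (hlayer b i hib) rfl).trans
      (reachable_induce_compl_boxProd_top_of_layer (hG (p b)) (hlayer b) hib hy)

end BoxProdTop

end SimpleGraph

open SimpleGraph

theorem stmt7_general (k s : ℕ) (hs : 3 ≤ s) :
    ∃ (V : Type) (G : SimpleGraph V), Finite V ∧ G.Connected ∧
      (Set.univ : Set V).ncard = (k + 2) * s + 1 ∧
      (G.edgeSet.ncard : ℝ)
        = ((k : ℝ) + 3) / 2 * (((k + 2) * s + 1 : ℕ) : ℝ) + ((k : ℝ) - 1) / 2 + 1 ∧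
      ∀ S : Set V, G.IsCutset S → (∀ T : Set V, G.IsCutset T → S.ncard ≤ T.ncard) →
        ¬ G.DegenSet k S := by
  obtain ⟨m, rfl⟩ : ∃ m, s = m + 3 := ⟨s - 3, by omega⟩
  let H := cycleGraph (m + 3) □ (⊤ : SimpleGraph (Fin (k + 2)))
  let A : Set (Fin (m + 3) × Fin (k + 2)) := {0} ×ˢ Set.univ
  have hA : A.ncard = k + 2 := by simp [A, Set.ncard_prod]
  refine ⟨_, H.addApex A, inferInstance,
    connected_addApex (cycleGraph_connected.boxProd connected_top) ⟨(0, 0), by simp [A]⟩,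
    by simp [Set.ncard_univ]; ring, ?_, fun S hS hmin => ?_⟩
  · have hH := two_mul_ncard_edgeSet_boxProd_top (α := Fin (k + 2))
      (fun v => cycleGraph_degree_three_le (n := m) (v := v))
    simp only [Fintype.card_fin] at hH
    have hH' : (2 * H.edgeSet.ncard : ℝ) = (m + 3) * (k + 2) * (2 + (k + 1)) := by exact_mod_cast hH
    rw [ncard_edgeSet_addApex, hA]
    push_cast
    linear_combination hH' / 2
  · have hAS : some '' A ⊆ S := image_some_subset_of_minimal_isCutset_addApex (v := (1, 0))
      (by simp [A])
      (fun T hT => preconnected_induce_compl_boxProd_top (by simp)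
        (fun p => (cycleGraph_induce_compl_singleton_connected (m + 1) p).preconnected)
        (by simpa [hA] using hT))
      hS hmin
    refine not_degenSet_of_isClique
      (isClique_boxProd_top_singleton_prod_univ 0).image_some_addApex hAS ?_
    rw [Set.ncard_image_of_injective _ (Option.some_injective _), hA]
    omega

theorem stmt7 (k s : ℕ) (hk : 2 ≤ k) (hs : 3 ≤ s) :
    ∃ (V : Type) (G : SimpleGraph V), Finite V ∧ G.Connected ∧
      (Set.univ : Set V).ncard = (k + 2) * s + 1 ∧
      (G.edgeSet.ncard : ℝ)
        = ((k : ℝ) + 3) / 2 * (((k + 2) * s + 1 : ℕ) : ℝ) + ((k : ℝ) - 1) / 2 + 1 ∧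
      ∀ S : Set V, G.IsCutset S → (∀ T : Set V, G.IsCutset T → S.ncard ≤ T.ncard) →
        ¬ G.DegenSet k S :=
  stmt7_general k s hs
end
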